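/- The Dirichlet-multinomial marginal likelihood (Γ(α)/Γ(α+N)) · ∏_j Γ(φ_j α + n_j)/Γ(φ_j α) can be rewritten, using the Stirling-number identity, as a sum over pseudo-count vectors (t_1,...,t_k) with 1 ≤ t_j ≤ n_j whenever n_j > 0 (and t_j = 0 when n_j = 0) of (α^{T}/α^{(N)}) · ∏_j φ_j^{t_j} S(n_j, t_j), where T = Σ_j t_j, N = Σ_j n_j, and α^{(N)} is the rising factorial. -/

import Mathlib

/-!
`Γ(x + m) / Γ(x)` is the rising factorial `x (x + 1) ⋯ (x + m - 1)`, whose expansion in powers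
of `x` has the unsigned Stirling numbers of the first kind as coefficients. Applying this to
`Γ(α) / Γ(α + N)` and to each factor `Γ(φ_j α + n_j) / Γ(φ_j α)` and expanding the product over
`j` gives a sum over all `t` with `t_j ≤ n_j`; the terms with `t_j = 0 < n_j` vanish because
`S(n, 0) = 0` for `n > 0`.
-/

/-- Unsigned Stirling numbers of the first kind. -/
def stirling1 : ℕ → ℕ → ℕ
  | 0, 0 => 1
  | 0, _ + 1 => 0
  | _ + 1, 0 => 0
  | n + 1, t + 1 => n * stirling1 n (t + 1) + stirling1 n t

open Finset

theorem stirling1_eq_stirlingFirst : ∀ n t, stirling1 n t = Nat.stirlingFirst n t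
  | 0, 0 | 0, _ + 1 | _ + 1, 0 => rfl
  | n + 1, t + 1 => by
    rw [stirling1, Nat.stirlingFirst_succ_succ, stirling1_eq_stirlingFirst n,
      stirling1_eq_stirlingFirst n]

theorem stirling1_zero_right {n : ℕ} (hn : n ≠ 0) : stirling1 n 0 = 0 := by
  obtain ⟨m, rfl⟩ := Nat.exists_eq_succ_of_ne_zero hn
  rfl

theorem Nat.prod_range_add_natCast_eq_sum_stirlingFirst {R : Type*} [CommSemiring R] (x : R)
    (n : ℕ) : ∏ i ∈ range n, (x + i) = ∑ t ∈ range (n + 1), (stirlingFirst n t : R) * x ^ t := by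
  induction n with
  | zero => simp
  | succ m ih =>
    set f : ℕ → R := fun t ↦ stirlingFirst m t * x ^ t
    have hshift : ∑ t ∈ range (m + 1), f (t + 1) + f 0 = ∑ t ∈ range (m + 1), f t := by
      rw [← sum_range_succ', sum_range_succ]
      simp [f, stirlingFirst_eq_zero_of_lt]
    have hm0 : (m : R) * f 0 = 0 := by
      cases m <;> simp [f]
    calc ∏ i ∈ range (m + 1), (x + i)
        = (m : R) * ∑ t ∈ range (m + 1), f t + x * ∑ t ∈ range (m + 1), f t := by
          rw [prod_range_succ, ih]; ring
      _ = (m : R) * (∑ t ∈ range (m + 1), f (t + 1) + f 0) + x * ∑ t ∈ range (m + 1), f t := by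
          rw [hshift]
      _ = ∑ t ∈ range (m + 1), (m * f (t + 1) + x * f t) := by
          rw [mul_add, hm0, add_zero, sum_add_distrib, mul_sum, mul_sum]
      _ = ∑ t ∈ range (m + 1 + 1), (stirlingFirst (m + 1) t : R) * x ^ t := by
          rw [sum_range_succ' _ (m + 1)]
          push_cast [f, stirlingFirst_succ_succ, stirlingFirst_succ_zero, zero_mul, add_zero]
          refine sum_congr rfl fun t _ ↦ by ring

theorem Real.Gamma_add_nat_div_Gamma {x : ℝ} (hx : 0 < x) (n : ℕ) :
    Gamma (x + n) / Gamma x = ∏ i ∈ range n, (x + i) := by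
  induction n with
  | zero => simp [(Gamma_pos_of_pos hx).ne']
  | succ m ih =>
    rw [Nat.cast_succ, ← add_assoc, Gamma_add_one (by positivity), mul_div_assoc, ih,
      prod_range_succ, mul_comm]

theorem Real.Gamma_add_nat_div_Gamma_eq_sum_stirling1 {x : ℝ} (hx : 0 < x) (n : ℕ) :
    Gamma (x + n) / Gamma x = ∑ t : Fin (n + 1), (stirling1 n t : ℝ) * x ^ (t : ℕ) := by
  simp only [Gamma_add_nat_div_Gamma hx, Nat.prod_range_add_natCast_eq_sum_stirlingFirst,
    stirling1_eq_stirlingFirst,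
    Fin.sum_univ_eq_sum_range (fun t ↦ (Nat.stirlingFirst n t : ℝ) * x ^ t)]

open Finset in
theorem stmt_4_general (k : ℕ) (α : ℝ) (hα : 0 < α) (φ : Fin k → ℝ)
    (hφ : ∀ j, 0 < φ j) (n : Fin k → ℕ) :
    (Real.Gamma α / Real.Gamma (α + (∑ j, n j : ℕ))) *
        ∏ j, (Real.Gamma (φ j * α + n j) / Real.Gamma (φ j * α)) =
      ∑ t ∈ Finset.univ.filter
          (fun t : (j : Fin k) → Fin (n j + 1) =>
            ∀ j, if n j = 0 then (t j : ℕ) = 0 else 1 ≤ (t j : ℕ)),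
        (α ^ (∑ j, (t j : ℕ)) / ∏ i ∈ Finset.range (∑ j, n j), (α + i)) *
          ∏ j, φ j ^ (t j : ℕ) * (stirling1 (n j) (t j) : ℝ) := by
  have hsupport : ∀ t : (j : Fin k) → Fin (n j + 1),
      ∏ j, φ j ^ (t j : ℕ) * (stirling1 (n j) (t j) : ℝ) ≠ 0 →
        ∀ j, if n j = 0 then (t j : ℕ) = 0 else 1 ≤ (t j : ℕ) := by
    intro t ht j
    have hs : stirling1 (n j) (t j) ≠ 0 := fun h ↦ ht (prod_eq_zero (mem_univ j) (by simp [h]))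
    split_ifs with hn
    · have := (t j).isLt
      omega
    · exact Nat.one_le_iff_ne_zero.2 fun h0 ↦ hs (h0 ▸ stirling1_zero_right hn)
  rw [sum_filter_of_ne fun t _ ht ↦ hsupport t (right_ne_zero_of_mul ht),
    ← Real.Gamma_add_nat_div_Gamma hα]
  simp only [Real.Gamma_add_nat_div_Gamma_eq_sum_stirling1 (mul_pos (hφ _) hα), prod_univ_sum,
    Fintype.piFinset_univ, mul_sum]
  refine sum_congr rfl fun t _ ↦ ?_
  rw [div_div_eq_mul_div]
  simp only [mul_pow, prod_mul_distrib, prod_pow_eq_pow_sum]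
  ring

open Finset in
/-- The Dirichlet-multinomial marginal likelihood rewritten, via the Stirling-number
identity, as a sum over pseudo-count vectors `t` with `1 ≤ t_j ≤ n_j` when `n_j > 0` and
`t_j = 0` when `n_j = 0`. -/
theorem stmt_4 (k : ℕ) (α : ℝ) (hα : 0 < α) (φ : Fin k → ℝ)
    (hφ : ∀ j, 0 < φ j) (hφ1 : ∑ j, φ j = 1) (n : Fin k → ℕ) :
    (Real.Gamma α / Real.Gamma (α + (∑ j, n j : ℕ))) *
        ∏ j, (Real.Gamma (φ j * α + n j) / Real.Gamma (φ j * α)) =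
      ∑ t ∈ Finset.univ.filter
          (fun t : (j : Fin k) → Fin (n j + 1) =>
            ∀ j, if n j = 0 then (t j : ℕ) = 0 else 1 ≤ (t j : ℕ)),
        (α ^ (∑ j, (t j : ℕ)) / ∏ i ∈ Finset.range (∑ j, n j), (α + i)) *
          ∏ j, φ j ^ (t j : ℕ) * (stirling1 (n j) (t j) : ℝ) :=
  stmt_4_general k α hα φ hφ n
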